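/- arXiv:1310.3245 — 4 statements merged into one kernel-verified Lean document; each statement's English description precedes it below -/
import Mathlib

section
/- Let A be a set, s ⊆ A × ω × ω with every section s_a a partial injection, and let w be a reduced cyclically reduced word (i.e., w is of the form a^n for a single letter a, or w starts and ends with different letters). If w = u·v without cancellation, then the set of fixed points of e_w[s] and the set of fixed points of e_{vu}[s] have the same cardinality; indeed the map n ↦ e_v[s](n) is a bijection from fix(e_w[s]) to fix(e_{vu}[s]). -/
/-- A word (list of signed letters) is reduced: no adjacent pair `a aᵃ⁻¹`. -/
def Reduced {A : Type*} (l : List (A × Bool)) : Prop :=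
  List.Chain' (fun x y => x.1 ≠ y.1 ∨ x.2 = y.2) l

/-- The section `s_a ⊆ ω × ω` of `s ⊆ A × ω × ω`. -/
def sec {A : Type*} (s : Set (A × ℕ × ℕ)) (a : A) : Set (ℕ × ℕ) :=
  {p | (a, p.1, p.2) ∈ s}

/-- Inverse of a relation on ω. -/
def relInv (R : Set (ℕ × ℕ)) : Set (ℕ × ℕ) := {p | (p.2, p.1) ∈ R}

/-- Composition `R ∘ S` of relations on ω (`S` applied first). -/
def relComp (R S : Set (ℕ × ℕ)) : Set (ℕ × ℕ) :=
  {p | ∃ k, (p.1, k) ∈ S ∧ (k, p.2) ∈ R}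

/-- `R` is (the graph of) a partial injection on ω. -/
def IsPInj (R : Set (ℕ × ℕ)) : Prop :=
  (∀ n m m', (n, m) ∈ R → (n, m') ∈ R → m = m') ∧
  (∀ n n' m, (n, m) ∈ R → (n', m) ∈ R → n = n')

/-- Evaluation of a single signed letter. -/
def lit {A : Type*} (s : Set (A × ℕ × ℕ)) (x : A × Bool) : Set (ℕ × ℕ) :=
  if x.2 then sec s x.1 else relInv (sec s x.1)

/-- The evaluation `e_w[s]` of a word `w`, defined recursively by composition. -/
def eval {A : Type*} (s : Set (A × ℕ × ℕ)) : List (A × Bool) → Set (ℕ × ℕ)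
  | [] => {p : ℕ × ℕ | p.1 = p.2}
  | x :: l => relComp (lit s x) (eval s l)

/-- `w` is cyclically reduced (in `Ŵ_A`): nonempty, reduced, and either a power
of a single letter, or its first and last letters differ. -/
def CyclRed {A : Type*} (l : List (A × Bool)) : Prop :=
  l ≠ [] ∧ Reduced l ∧
    ((∃ c, ∀ x ∈ l, x = c) ∨
     (∃ x y, l.head? = some x ∧ l.getLast? = some y ∧ x.1 ≠ y.1))

lemma relComp_assoc (R S T : Set (ℕ × ℕ)) :
    relComp R (relComp S T) = relComp (relComp R S) T := by
  ext p
  constructor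
  · rintro ⟨k, ⟨j, hj, hjk⟩, hk⟩; exact ⟨j, hj, k, hjk, hk⟩
  · rintro ⟨j, hj, k, hjk, hk⟩; exact ⟨k, ⟨j, hj, hjk⟩, hk⟩

lemma eval_append {A : Type*} (s : Set (A × ℕ × ℕ)) (u v : List (A × Bool)) :
    eval s (u ++ v) = relComp (eval s u) (eval s v) := by
  induction u with
  | nil =>
    ext ⟨a, b⟩
    simp only [List.nil_append, relComp, Set.mem_setOf_eq]
    constructor
    · intro h; exact ⟨b, h, rfl⟩
    · rintro ⟨k, hk, h⟩
      have hkb : k = b := h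
      subst hkb; exact hk
  | cons x u ih =>
    rw [List.cons_append]
    show relComp (lit s x) (eval s (u ++ v)) = _
    rw [ih, relComp_assoc]
    rfl

lemma IsPInj.comp {R S : Set (ℕ × ℕ)} (hR : IsPInj R) (hS : IsPInj S) :
    IsPInj (relComp R S) := by
  constructor
  · rintro n m m' ⟨k, hk, hkm⟩ ⟨k', hk', hk'm⟩
    cases hS.1 n k k' hk hk'
    exact hR.1 k m m' hkm hk'm
  · rintro n n' m ⟨k, hk, hkm⟩ ⟨k', hk', hk'm⟩
    cases hR.2 k k' m hkm hk'm
    exact hS.2 n n' k hk hk'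

lemma eval_pinj {A : Type*} (s : Set (A × ℕ × ℕ)) (hs : ∀ a, IsPInj (sec s a))
    (w : List (A × Bool)) : IsPInj (eval s w) := by
  induction w with
  | nil =>
    constructor
    · intro n m m' h h'; simp only [eval, Set.mem_setOf_eq] at h h'; omega
    · intro n n' m h h'; simp only [eval, Set.mem_setOf_eq] at h h'; omega
  | cons x l ih =>
    refine IsPInj.comp ?_ ih
    unfold lit
    split
    · exact hs x.1
    · exact ⟨fun n m m' h h' => (hs x.1).2 m m' n h h',
        fun n n' m h h' => (hs x.1).1 m n n' h h'⟩

/-- If `w = u ++ v` (without cancellation) is cyclically reduced, then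
`n ↦ e_v[s](n)` is a bijection from `fix(e_w[s])` onto `fix(e_{vu}[s])`;
in particular the two sets of fixed points have the same cardinality. -/
theorem stmt2 {A : Type*} (s : Set (A × ℕ × ℕ)) (hs : ∀ a, IsPInj (sec s a))
    (u v : List (A × Bool)) (hw : CyclRed (u ++ v)) :
    ∃ f : ℕ → ℕ,
      (∀ n, (n, n) ∈ eval s (u ++ v) → (n, f n) ∈ eval s v) ∧
      Set.BijOn f {n | (n, n) ∈ eval s (u ++ v)} {n | (n, n) ∈ eval s (v ++ u)} := by
  classical
  have hfix : ∀ n, (n, n) ∈ eval s (u ++ v) ↔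
      ∃ k, (n, k) ∈ eval s v ∧ (k, n) ∈ eval s u := by
    intro n; rw [eval_append]; rfl
  set f : ℕ → ℕ := fun n =>
    if h : ∃ k, (n, k) ∈ eval s v ∧ (k, n) ∈ eval s u then h.choose else n with hf
  have key : ∀ n, (n, n) ∈ eval s (u ++ v) →
      (n, f n) ∈ eval s v ∧ (f n, n) ∈ eval s u := by
    intro n hn
    rw [hfix] at hn
    simp only [hf, dif_pos hn]
    exact hn.choose_spec
  refine ⟨f, fun n hn => (key n hn).1, ?_, ?_, ?_⟩
  · intro n hn
    obtain ⟨h1, h2⟩ := key n hn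
    rw [Set.mem_setOf_eq, eval_append]
    exact ⟨n, h2, h1⟩
  · intro n hn n' hn' he
    exact (eval_pinj s hs v).2 n n' (f n) (key n hn).1 (he ▸ (key n' hn').1)
  · intro m hm
    rw [Set.mem_setOf_eq, eval_append] at hm
    obtain ⟨k, hku, hkv⟩ := hm
    have hk : (k, k) ∈ eval s (u ++ v) := by
      rw [hfix]; exact ⟨m, hkv, hku⟩
    refine ⟨k, hk, ?_⟩
    obtain ⟨h1, h2⟩ := key k hk
    exact (eval_pinj s hs v).1 k (f k) m h1 hkv
end

section
/- The forcing Q_{A,ρ} for adding a cofinitary group (conditions: pairs (s,F) with s ⊆ A × ω × ω finite, each s_a a finite injection, F a finite set of cyclically reduced words in W_{A∪B}; extension as in Definition 2.4) has the Knaster property: every uncountable set of conditions contains an uncountable subset of pairwise compatible conditions. -/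
/-- Evaluation of a word over `B` as a product of the permutations `ρ(b)`. -/
def permEval {B : Type*} (ρ : B → Equiv.Perm ℕ) : List (B × Bool) → Equiv.Perm ℕ
  | [] => 1
  | x :: l => (if x.2 then ρ x.1 else (ρ x.1)⁻¹) * permEval ρ l

/-- `ρ : B → S_∞` induces a cofinitary representation of the free group `F_B`:
every reduced word evaluates either to the identity or to a permutation with
finitely many fixed points. -/
def Cofinitary {B : Type*} (ρ : B → Equiv.Perm ℕ) : Prop :=
  ∀ l : List (B × Bool), Reduced l →
    permEval ρ l = 1 ∨ {n : ℕ | permEval ρ l n = n}.Finite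

/-- Combine `s ⊆ A × ω × ω` and `ρ : B → S_∞` into one set of triples over
the alphabet `A ⊕ B`, so that `e_w[s,ρ] = eval (mix s ρ) w`. -/
def mix {A B : Type*} (s : Set (A × ℕ × ℕ)) (ρ : B → Equiv.Perm ℕ) :
    Set ((A ⊕ B) × ℕ × ℕ) :=
  {q | Sum.elim (fun a => (a, q.2) ∈ s) (fun b => ρ b q.2.1 = q.2.2) q.1}

/-- A condition of `Q_{A,ρ}`: a finite `s ⊆ A × ω × ω` with every section a
finite injection, together with a finite set of cyclically reduced words over
`A ∪ B`. -/
def IsQCond {A B : Type*}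
    (p : Set (A × ℕ × ℕ) × Set (List ((A ⊕ B) × Bool))) : Prop :=
  p.1.Finite ∧ (∀ a, IsPInj (sec p.1 a)) ∧ p.2.Finite ∧ ∀ w ∈ p.2, CyclRed w

/-- The extension relation of `Q_{A,ρ}`: `QLe ρ p q` means `p ≤ q`, i.e.
`p` extends `q`: larger data, larger side condition, and no new fixed points of
`e_w[·,ρ]` for words `w` in the side condition of `q`. -/
def QLe {A B : Type*} (ρ : B → Equiv.Perm ℕ)
    (p q : Set (A × ℕ × ℕ) × Set (List ((A ⊕ B) × Bool))) : Prop :=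
  q.1 ⊆ p.1 ∧ q.2 ⊆ p.2 ∧
    ∀ w ∈ q.2, ∀ n : ℕ, (n, n) ∈ eval (mix p.1 ρ) w → (n, n) ∈ eval (mix q.1 ρ) w

open Set

section DeltaSystem

variable {ι α β : Type*}

theorem exists_not_countable_fiber {S : Set ι} (hS : ¬ S.Countable) {g : ι → β} {C : Set β}
    (hC : C.Countable) (hg : MapsTo g S C) : ∃ c ∈ C, ¬ {p ∈ S | g p = c}.Countable := by
  by_contra! h
  exact hS ((hC.biUnion h).mono fun p hp =>
    mem_biUnion (hg hp) (show p ∈ {q ∈ S | g q = g p} from ⟨hp, rfl⟩))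

theorem exists_not_countable_pairwiseDisjoint {S : Set ι} (hS : ¬ S.Countable) {f : ι → Set α}
    (hfS : ∀ p ∈ S, (f p).Countable) (hf : ∀ x, {p ∈ S | x ∈ f p}.Countable) :
    ∃ T ⊆ S, ¬ T.Countable ∧ T.PairwiseDisjoint f := by
  let F : Set (Set ι) := {T | T ⊆ S ∧ T.PairwiseDisjoint f}
  have hF : Order.IsOfFiniteCharacter F := fun T =>
    ⟨fun hT U hUT _ => ⟨hUT.trans hT.1, hT.2.subset hUT⟩, fun h =>
      ⟨fun p hp => (h {p} (singleton_subset_iff.2 hp) (finite_singleton p)).1 rfl,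
        fun p hp q hq hpq => (h {p, q} (insert_subset hp (singleton_subset_iff.2 hq))
          (toFinite _)).2 (mem_insert p _) (mem_insert_of_mem p rfl) hpq⟩⟩
  obtain ⟨M, -, hM⟩ := hF.exists_maximal (x := ∅) ⟨empty_subset S, pairwiseDisjoint_empty⟩
  refine ⟨M, hM.prop.1, fun hMc => hS ?_, hM.prop.2⟩
  have hcover : S ⊆ M ∪ ⋃ p ∈ M, ⋃ x ∈ f p, {q ∈ S | x ∈ f q} := by
    intro q hq
    by_cases hqM : q ∈ M
    · exact Or.inl hqM
    have hins : ¬ (insert q M).PairwiseDisjoint f := fun h =>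
      hqM (hM.mem_of_prop_insert ⟨insert_subset hq hM.prop.1, h⟩)
    obtain ⟨p, hpM, -, hqp⟩ : ∃ p ∈ M, q ≠ p ∧ ¬ Disjoint (f q) (f p) := by
      simpa [pairwiseDisjoint_insert, hM.prop.2] using hins
    obtain ⟨x, hxq, hxp⟩ := not_disjoint_iff.1 hqp
    exact Or.inr (mem_biUnion hpM (mem_biUnion hxp ⟨hq, hxq⟩))
  exact (hMc.union (hMc.biUnion fun p hp =>
    (hfS p (hM.prop.1 hp)).biUnion fun x _ => hf x)).mono hcover

theorem exists_pairwise_inter_subset_of_encard_eq (n : ℕ) {S : Set ι} (hS : ¬ S.Countable)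
    {f : ι → Set α} (hcard : ∀ p ∈ S, (f p).encard = n) :
    ∃ R : Set α, R.Finite ∧
      ∃ T ⊆ S, ¬ T.Countable ∧ T.Pairwise fun p q => f p ∩ f q ⊆ R := by
  induction n generalizing S f with
  | zero =>
    refine ⟨∅, finite_empty, S, subset_rfl, hS, fun p hp q _ _ => ?_⟩
    simp [encard_eq_zero.1 (hcard p hp)]
  | succ n ih =>
    by_cases hx : ∃ x, ¬ {p ∈ S | x ∈ f p}.Countable
    · obtain ⟨x, hx⟩ := hx
      have hcard' : ∀ p ∈ {p ∈ S | x ∈ f p}, (f p \ {x}).encard = n := fun p hp => by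
        have h := encard_sdiff_singleton_add_one hp.2
        rw [hcard p hp.1, Nat.cast_succ] at h
        exact WithTop.add_right_cancel ENat.one_ne_top h
      obtain ⟨R, hR, T, hTS, hT, hTR⟩ := ih hx hcard'
      refine ⟨insert x R, hR.insert x, T, fun p hp => (hTS hp).1, hT, ?_⟩
      intro p hp q hq hpq y hy
      by_cases hyx : y = x
      · exact hyx ▸ mem_insert y R
      · exact mem_insert_of_mem x (hTR hp hq hpq ⟨⟨hy.1, hyx⟩, ⟨hy.2, hyx⟩⟩)
    · push Not at hx
      obtain ⟨T, hTS, hT, hdisj⟩ := exists_not_countable_pairwiseDisjoint hS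
        (fun p hp => (finite_of_encard_eq_coe (hcard p hp)).countable) hx
      exact ⟨∅, finite_empty, T, hTS, hT, fun p hp q hq hpq =>
        (disjoint_iff_inter_eq_empty.1 (hdisj hp hq hpq)).subset⟩

/-- The Δ-system lemma, in the weak form where pairwise intersections are only contained in
the root. -/
theorem exists_pairwise_inter_subset_finite {S : Set ι} (hS : ¬ S.Countable) {f : ι → Set α}
    (hf : ∀ p ∈ S, (f p).Finite) :
    ∃ R : Set α, R.Finite ∧
      ∃ T ⊆ S, ¬ T.Countable ∧ T.Pairwise fun p q => f p ∩ f q ⊆ R := by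
  obtain ⟨-, ⟨n, rfl⟩, hn⟩ := exists_not_countable_fiber hS (g := fun p => (f p).encard)
    (countable_range ((↑) : ℕ → ℕ∞)) fun p hp => ⟨_, (hf p hp).cast_ncard_eq⟩
  obtain ⟨R, hR, T, hTS, hT, hTR⟩ :=
    exists_pairwise_inter_subset_of_encard_eq n hn fun p hp => hp.2
  exact ⟨R, hR, T, fun p hp => (hTS hp).1, hT, hTR⟩

end DeltaSystem

section Sections

variable {A : Type*}

lemma sec_union (s t : Set (A × ℕ × ℕ)) (a : A) : sec (s ∪ t) a = sec s a ∪ sec t a := rfl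

lemma sec_union_eq_left {s t : Set (A × ℕ × ℕ)} {a : A}
    (h : (sec t a).Nonempty → sec s a = sec t a) : sec (s ∪ t) a = sec s a := by
  rcases (sec t a).eq_empty_or_nonempty with ht | ht
  · rw [sec_union, ht, union_empty]
  · rw [sec_union, h ht, union_self]

lemma sec_inter_fst_preimage (s : Set (A × ℕ × ℕ)) {R : Set A} {a : A} (ha : a ∈ R) :
    sec (s ∩ Prod.fst ⁻¹' R) a = sec s a :=
  ext fun _ => and_iff_left ha

lemma eval_mix_congr {B : Type*} (ρ : B → Equiv.Perm ℕ) {s s' : Set (A × ℕ × ℕ)}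
    {w : List ((A ⊕ B) × Bool)}
    (h : ∀ a, (∃ b, (Sum.inl a, b) ∈ w) → sec s a = sec s' a) :
    eval (mix s ρ) w = eval (mix s' ρ) w := by
  induction w with
  | nil => rfl
  | cons x l ih =>
    have hl := ih fun a ⟨b, hb⟩ => h a ⟨b, List.mem_cons_of_mem x hb⟩
    have hx : sec (mix s ρ) x.1 = sec (mix s' ρ) x.1 := by
      rcases x with ⟨a | b, c⟩
      · exact h a ⟨c, List.mem_cons_self⟩
      · rfl
    simp only [eval, lit, hl, hx]

end Sections

section Compatibility

variable {A B : Type*}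

abbrev QCondition (A B : Type*) := Set (A × ℕ × ℕ) × Set (List ((A ⊕ B) × Bool))

def QCompatible (ρ : B → Equiv.Perm ℕ) (p q : QCondition A B) : Prop :=
  ∃ r, IsQCond r ∧ QLe ρ r p ∧ QLe ρ r q

def relevantLetters (p : QCondition A B) : Set A :=
  {a | (sec p.1 a).Nonempty} ∪ {a | ∃ w ∈ p.2, ∃ b, (Sum.inl a, b) ∈ w}

lemma IsQCond.relevantLetters_finite {p : QCondition A B} (hp : IsQCond p) :
    (relevantLetters p).Finite := by
  refine ((hp.1.image Prod.fst).union (hp.2.2.1.biUnion fun w _ =>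
    (w.finite_toSet.image Prod.fst).preimage Sum.inl_injective.injOn)).subset ?_
  rintro a (⟨x, hx⟩ | ⟨w, hw, b, hb⟩)
  · exact Or.inl ⟨(a, x), hx, rfl⟩
  · exact Or.inr (mem_biUnion hw ⟨(Sum.inl a, b), hb, rfl⟩)

lemma IsQCond.sup {p q : QCondition A B} (hp : IsQCond p) (hq : IsQCond q)
    (H : ∀ a, (sec p.1 a).Nonempty → (sec q.1 a).Nonempty → sec p.1 a = sec q.1 a) :
    IsQCond (p ⊔ q) := by
  refine ⟨hp.1.union hq.1, fun a => ?_, hp.2.2.1.union hq.2.2.1,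
    fun w hw => hw.elim (hp.2.2.2 w) (hq.2.2.2 w)⟩
  change IsPInj (sec (p.1 ∪ q.1) a)
  rcases (sec p.1 a).eq_empty_or_nonempty with hpa | hpa
  · rw [sec_union, hpa, empty_union]
    exact hq.2.1 a
  · rw [sec_union_eq_left (H a hpa)]
    exact hp.2.1 a

lemma qLe_sup_left (ρ : B → Equiv.Perm ℕ) {p q : QCondition A B}
    (H : ∀ a ∈ relevantLetters p, (sec q.1 a).Nonempty → sec p.1 a = sec q.1 a) :
    QLe ρ (p ⊔ q) p := by
  refine ⟨subset_union_left, subset_union_left,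
    fun w hw n (hn : _ ∈ eval (mix (p.1 ∪ q.1) ρ) w) => ?_⟩
  rwa [eval_mix_congr ρ fun a ha => sec_union_eq_left (H a (Or.inr ⟨w, hw, ha⟩))] at hn

theorem qCompatible_of_sec_eq (ρ : B → Equiv.Perm ℕ) {p q : QCondition A B}
    (hp : IsQCond p) (hq : IsQCond q)
    (H : ∀ a ∈ relevantLetters p, a ∈ relevantLetters q → sec p.1 a = sec q.1 a) :
    QCompatible ρ p q :=
  ⟨p ⊔ q, hp.sup hq fun a hpa hqa => H a (Or.inl hpa) (Or.inl hqa),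
    qLe_sup_left ρ fun a ha hqa => H a ha (Or.inl hqa),
    sup_comm p q ▸ qLe_sup_left ρ fun a ha hpa => (H a (Or.inl hpa) ha).symm⟩

end Compatibility

theorem stmt5_general {A B : Type*} (ρ : B → Equiv.Perm ℕ)
    (S : Set (Set (A × ℕ × ℕ) × Set (List ((A ⊕ B) × Bool))))
    (hS : ∀ p ∈ S, IsQCond p) (hunc : ¬ S.Countable) :
    ∃ T ⊆ S, ¬ T.Countable ∧
      ∀ p ∈ T, ∀ q ∈ T, ∃ r, IsQCond r ∧ QLe ρ r p ∧ QLe ρ r q := by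
  obtain ⟨R, hR, T, hTS, hT, hTR⟩ :=
    exists_pairwise_inter_subset_finite hunc fun p hp => (hS p hp).relevantLetters_finite
  obtain ⟨s, -, hs⟩ := exists_not_countable_fiber hT (g := fun p => p.1 ∩ Prod.fst ⁻¹' R)
    (countable_ofPred_finite_subset (hR.countable.prod countable_univ))
    fun p hp => ⟨(hS p (hTS hp)).1.subset inter_subset_left, fun x hx => ⟨hx.2, trivial⟩⟩
  refine ⟨{p ∈ T | p.1 ∩ Prod.fst ⁻¹' R = s}, fun p hp => hTS hp.1, hs, fun p hp q hq =>
    qCompatible_of_sec_eq ρ (hS p (hTS hp.1)) (hS q (hTS hq.1)) fun a hap haq => ?_⟩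
  obtain rfl | hpq := eq_or_ne p q
  · rfl
  have haR : a ∈ R := hTR hp.1 hq.1 hpq ⟨hap, haq⟩
  rw [← sec_inter_fst_preimage p.1 haR, ← sec_inter_fst_preimage q.1 haR, hp.2, hq.2]

/-- `Q_{A,ρ}` has the Knaster property: every uncountable set of conditions
contains an uncountable subset of pairwise compatible conditions. -/
theorem stmt5 {A B : Type*} (ρ : B → Equiv.Perm ℕ) (hρ : Cofinitary ρ)
    (S : Set (Set (A × ℕ × ℕ) × Set (List ((A ⊕ B) × Bool))))
    (hS : ∀ p ∈ S, IsQCond p) (hunc : ¬ S.Countable) :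
    ∃ T ⊆ S, ¬ T.Countable ∧
      ∀ p ∈ T, ∀ q ∈ T, ∃ r, IsQCond r ∧ QLe ρ r p ∧ QLe ρ r q :=
  stmt5_general ρ S hS hunc
end

section
/- Let s ⊆ A × ω × ω be finite with every s_a a partial injection, fix a ∈ A, fix n ∈ ω with n ∉ dom(s_a), and let w be an a-good word of rank 1, i.e., w = a^{k} u where k ∈ ℤ \ {0} and u is a nonempty word not containing the letter a. Then for every finite set C ⊆ ω there are cofinitely many m ∈ ω such that for all l ∈ ω: e_w[s ∪ {(a,n,m)}](l) ∈ C if and only if e_w[s](l) is defined and lies in C. -/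
/-!
Choose `m` outside `C`, outside `dom(s_a)` and outside the range of `e_u[s]`, all finite sets
(the range because `u` is nonempty). Since `u` avoids `a`, `e_u` is unchanged by the new pair.
The new edge `n ↦ m` of `a` ends at a point where no further `a`-step is possible, so a path along
`a^k` with `k > 0` that uses it must end at `m ∉ C`. Dually a path along `a^k` with `k < 0` can use
the reversed edge `m ↦ n` only as its first step, so it must start at `m`, which `e_u[s]` never reaches.
-/

section

variable {A : Type*}

lemma mem_eval_append (s : Set (A × ℕ × ℕ)) (w₁ w₂ : List (A × Bool)) {k c : ℕ} :
    (k, c) ∈ eval s (w₁ ++ w₂) ↔ ∃ i, (k, i) ∈ eval s w₂ ∧ (i, c) ∈ eval s w₁ := by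
  induction w₁ generalizing c with
  | nil => exact ⟨fun h => ⟨c, h, rfl⟩, fun ⟨_, h, hc⟩ => (show _ = c from hc) ▸ h⟩
  | cons x w ih =>
    simp only [List.cons_append, eval, relComp, Set.mem_ofPred_eq, ih]
    exact ⟨fun ⟨i, ⟨j, hj, hi⟩, hc⟩ => ⟨j, hj, i, hi, hc⟩,
      fun ⟨j, hj, i, hi, hc⟩ => ⟨i, ⟨j, hj, hi⟩, hc⟩⟩

lemma mem_eval_singleton (s : Set (A × ℕ × ℕ)) (x : A × Bool) {k c : ℕ} :
    (k, c) ∈ eval s [x] ↔ (k, c) ∈ lit s x :=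
  ⟨fun ⟨_, hi, hc⟩ => (show k = _ from hi) ▸ hc, fun h => ⟨k, rfl, h⟩⟩

lemma lit_mono {s s' : Set (A × ℕ × ℕ)} (h : s ⊆ s') (x : A × Bool) : lit s x ⊆ lit s' x := by
  cases x with
  | mk c b => cases b <;> exact fun p hp => h hp

lemma eval_mono {s s' : Set (A × ℕ × ℕ)} (h : s ⊆ s') (w : List (A × Bool)) :
    eval s w ⊆ eval s' w := by
  induction w with
  | nil => exact subset_rfl
  | cons x w ih => exact fun _ ⟨i, hi, hc⟩ => ⟨i, ih hi, lit_mono h x hc⟩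

lemma lit_finite {s : Set (A × ℕ × ℕ)} (hs : s.Finite) (x : A × Bool) : (lit s x).Finite := by
  have hsec : (sec s x.1).Finite := hs.preimage (Prod.mk_right_injective x.1).injOn
  unfold lit
  split
  · exact hsec
  · exact hsec.preimage Prod.swap_injective.injOn

lemma finite_range_eval_cons {s : Set (A × ℕ × ℕ)} (hs : s.Finite) (x : A × Bool)
    (w : List (A × Bool)) : (Prod.snd '' eval s (x :: w)).Finite :=
  ((lit_finite hs x).image Prod.snd).subset fun _ ⟨_, ⟨_, _, hc⟩, hp⟩ => ⟨_, hc, hp⟩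

section insert

variable (s : Set (A × ℕ × ℕ)) (a : A) (n m : ℕ)

lemma lit_insert_of_ne {x : A × Bool} (hx : x.1 ≠ a) :
    lit (insert (a, n, m) s) x = lit s x := by
  have hsec : sec (insert (a, n, m) s) x.1 = sec s x.1 := by
    ext p
    simp [sec, hx]
  simp only [lit, hsec]

lemma eval_insert_of_forall_ne {w : List (A × Bool)} (hw : ∀ x ∈ w, x.1 ≠ a) :
    eval (insert (a, n, m) s) w = eval s w := by
  induction w with
  | nil => rfl
  | cons x w ih =>
    simp only [eval, lit_insert_of_ne s a n m (hw x List.mem_cons_self),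
      ih fun y hy => hw y (List.mem_cons_of_mem x hy)]

lemma lit_insert_true : lit (insert (a, n, m) s) (a, true) = insert (n, m) (lit s (a, true)) := by
  ext ⟨p, q⟩
  simp [lit, sec]

lemma lit_insert_false :
    lit (insert (a, n, m) s) (a, false) = insert (m, n) (lit s (a, false)) := by
  ext ⟨p, q⟩
  simp [lit, sec, relInv, and_comm]

end insert

section replicate

variable {s s' : Set (A × ℕ × ℕ)} {x : A × Bool} {n m : ℕ}

lemma mem_eval_replicate_or_snd_eq (hlit : lit s' x ⊆ insert (n, m) (lit s x))
    (hm : m ∉ Prod.fst '' lit s x) (j : ℕ) {k c : ℕ}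
    (h : (k, c) ∈ eval s' (List.replicate j x)) :
    (k, c) ∈ eval s (List.replicate j x) ∨ c = m := by
  induction j generalizing c with
  | zero => exact Or.inl h
  | succ j ih =>
    obtain ⟨i, hi, hc⟩ := h
    rcases hlit hc with hnew | hold
    · exact Or.inr (Prod.mk.inj hnew).2
    · rcases ih hi with hi | rfl
      · exact Or.inl ⟨i, hi, hold⟩
      · exact absurd ⟨_, hold, rfl⟩ hm

lemma mem_eval_replicate_or_fst_eq (hlit : lit s' x ⊆ insert (m, n) (lit s x))
    (hm : m ∉ Prod.snd '' lit s x) (j : ℕ) {k c : ℕ}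
    (h : (k, c) ∈ eval s' (List.replicate j x)) :
    (k, c) ∈ eval s (List.replicate j x) ∨ k = m := by
  induction j generalizing k with
  | zero => exact Or.inl h
  | succ j ih =>
    rw [List.replicate_succ', mem_eval_append] at h ⊢
    obtain ⟨i, hi, hc⟩ := h
    rw [mem_eval_singleton] at hi
    rcases hlit hi with hnew | hold
    · exact Or.inr (Prod.mk.inj hnew).1
    · rcases ih hc with hc | rfl
      · exact Or.inl ⟨i, (mem_eval_singleton s x).2 hold, hc⟩
      · exact absurd ⟨_, hold, rfl⟩ hm

end replicate

end

theorem stmt6_general {A : Type*} (s : Set (A × ℕ × ℕ)) (hfin : s.Finite)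
    (a : A) (n : ℕ)
    (j : ℕ) (b : Bool) (u : List (A × Bool)) (hu : u ≠ [])
    (hua : ∀ x ∈ u, x.1 ≠ a)
    (w : List (A × Bool)) (hw : w = List.replicate j (a, b) ++ u)
    (C : Set ℕ) (hC : C.Finite) :
    ∀ᶠ m in Filter.cofinite, ∀ l : ℕ,
      ((∃ c ∈ C, (l, c) ∈ eval (insert (a, n, m) s) w) ↔
        ∃ c ∈ C, (l, c) ∈ eval s w) := by
  subst hw
  obtain ⟨x, u, rfl⟩ := List.exists_cons_of_ne_nil hu
  have hbad : (C ∪ Prod.fst '' sec s a ∪ Prod.snd '' eval s (x :: u)).Finite :=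
    (hC.union ((lit_finite hfin (a, true)).image _)).union (finite_range_eval_cons hfin x u)
  filter_upwards [hbad.eventually_cofinite_notMem] with m hm l
  simp only [Set.mem_union, not_or] at hm
  obtain ⟨⟨hmC, hmdom⟩, hmran⟩ := hm
  refine ⟨?_, fun ⟨c, hc, h⟩ => ⟨c, hc, eval_mono (Set.subset_insert _ _) _ h⟩⟩
  rintro ⟨c, hc, h⟩
  rw [mem_eval_append, eval_insert_of_forall_ne s a n m hua] at h
  obtain ⟨k, hlk, hkc⟩ := h
  refine ⟨c, hc, (mem_eval_append _ _ _).2 ⟨k, hlk, ?_⟩⟩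
  cases b with
  | true =>
    exact (mem_eval_replicate_or_snd_eq (lit_insert_true s a n m).subset hmdom j hkc).resolve_right
      fun hcm => hmC (hcm ▸ hc)
  | false =>
    have hmran' : m ∉ Prod.snd '' lit s (a, false) := fun ⟨p, hp, hpm⟩ => hmdom ⟨p.swap, hp, hpm⟩
    exact (mem_eval_replicate_or_fst_eq (lit_insert_false s a n m).subset hmran' j hkc).resolve_right
      fun hkm => hmran ⟨(l, k), hlk, hkm⟩

/-- Lemma 2.9 for `a`-good words of rank 1: `w = a^k u` with `u` nonempty,
avoiding `a`. For `n ∉ dom(s_a)` and finite `C ⊆ ω`, for cofinitely many `m`,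
`e_w[s ∪ {(a,n,m)}](l) ∈ C` iff `e_w[s](l)` is defined and lies in `C`. -/
theorem stmt6 {A : Type*} (s : Set (A × ℕ × ℕ)) (hfin : s.Finite)
    (hs : ∀ a, IsPInj (sec s a)) (a : A) (n : ℕ)
    (hn : ∀ m, (a, n, m) ∉ s)
    (j : ℕ) (hj : 1 ≤ j) (b : Bool) (u : List (A × Bool)) (hu : u ≠ [])
    (hured : Reduced u) (hua : ∀ x ∈ u, x.1 ≠ a)
    (w : List (A × Bool)) (hw : w = List.replicate j (a, b) ++ u)
    (C : Set ℕ) (hC : C.Finite) :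
    ∀ᶠ m in Filter.cofinite, ∀ l : ℕ,
      ((∃ c ∈ C, (l, c) ∈ eval (insert (a, n, m) s) w) ↔
        ∃ c ∈ C, (l, c) ∈ eval s w) :=
  stmt6_general s hfin a n j b u hu hua w hw C hC
end

section
/- Every σ-Suslin forcing notion is σ-linked, and hence has the Knaster property. Specifically, if S is n-Suslin, then conditions (s,f) and (s,g) with the same finite part s and with f ↾ (n·|s|) = g ↾ (n·|s|) are compatible; this partitions S into countably many linked pieces. -/
/-- Every `n`-Suslin forcing (conditions `(s,f)` with `s ∈ <ω ω`, `f ∈ ω^ω`;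
whenever `(s,f) ≤ (t,g)` and `(t,h) ∈ S` with `h ↾ (n·|s|) = g ↾ (n·|s|)`,
then `(s,f)` and `(t,h)` are compatible) is σ-linked: conditions with the same
finite part agreeing on `n·|s|` are compatible, and `S` splits into countably
many linked pieces; hence it has the Knaster property. -/
theorem stmt17 (S : Set (List ℕ × (ℕ → ℕ))) (le : (List ℕ × (ℕ → ℕ)) → (List ℕ × (ℕ → ℕ)) → Prop)
    (n : ℕ)
    (hrefl : ∀ p ∈ S, le p p)
    (hSuslin : ∀ p q r, p ∈ S → q ∈ S → r ∈ S → le p q → r.1 = q.1 →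
      (∀ i < n * p.1.length, r.2 i = q.2 i) → ∃ t ∈ S, le t p ∧ le t r) :
    (∀ p ∈ S, ∀ q ∈ S, p.1 = q.1 → (∀ i < n * p.1.length, p.2 i = q.2 i) →
        ∃ t ∈ S, le t p ∧ le t q) ∧
    (∃ c : (List ℕ × (ℕ → ℕ)) → ℕ, ∀ p ∈ S, ∀ q ∈ S, c p = c q →
        ∃ t ∈ S, le t p ∧ le t q) ∧
    (∀ T ⊆ S, ¬ T.Countable → ∃ T' ⊆ T, ¬ T'.Countable ∧
        ∀ p ∈ T', ∀ q ∈ T', ∃ t ∈ S, le t p ∧ le t q) := by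
  have h1 : ∀ p ∈ S, ∀ q ∈ S, p.1 = q.1 → (∀ i < n * p.1.length, p.2 i = q.2 i) →
      ∃ t ∈ S, le t p ∧ le t q := by
    intro p hp q hq h1 h2
    exact hSuslin p p q hp hp hq (hrefl p hp) h1.symm (fun i hi => (h2 i hi).symm)
  set c : (List ℕ × (ℕ → ℕ)) → ℕ :=
    fun p => Encodable.encode (p.1, (List.range (n * p.1.length)).map p.2) with hc
  have hlink : ∀ p ∈ S, ∀ q ∈ S, c p = c q → ∃ t ∈ S, le t p ∧ le t q := by
    intro p hp q hq hcpq
    have hpair : (p.1, (List.range (n * p.1.length)).map p.2)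
        = (q.1, (List.range (n * q.1.length)).map q.2) := Encodable.encode_injective hcpq
    obtain ⟨h1', h2''⟩ := Prod.mk.inj hpair
    have h2' : (List.range (n * p.1.length)).map p.2
        = (List.range (n * p.1.length)).map q.2 := by
      rw [h2'', h1']
    refine h1 p hp q hq h1' ?_
    intro i hi
    have := congrArg (fun l => l[i]?) h2'
    simp only [List.getElem?_map, List.getElem?_range hi] at this
    simpa using this
  refine ⟨h1, ⟨c, hlink⟩, ?_⟩
  intro T hTS hT
  have : ¬ ∀ k : ℕ, (T ∩ c ⁻¹' {k}).Countable := by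
    intro h
    apply hT
    have : T ⊆ ⋃ k : ℕ, T ∩ c ⁻¹' {k} := by
      intro x hx
      exact Set.mem_iUnion.2 ⟨c x, hx, rfl⟩
    exact (Set.countable_iUnion h).mono this
  push_neg at this
  obtain ⟨k, hk⟩ := this
  refine ⟨T ∩ c ⁻¹' {k}, Set.inter_subset_left, hk, ?_⟩
  rintro p ⟨hpT, hpk⟩ q ⟨hqT, hqk⟩
  exact hlink p (hTS hpT) q (hTS hqT) (by simp only [Set.mem_preimage, Set.mem_singleton_iff] at hpk hqk; rw [hpk, hqk])
end
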